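/- For any two subspaces H₁, H₂ of E, the commutator of the orthogonal projections satisfies [Π(H₁), Π(H₂)] = 𝔇(H₁,H₂)·(Π(H₁) − Π(H₂)), where the product is composition of operators. -/

import Mathlib

variable {E : Type*} [NormedAddCommGroup E] [InnerProductSpace ℂ E] [FiniteDimensional ℂ E]

/-- The orthogonal projection onto a subspace `K`, regarded as an operator on `E`. -/
noncomputable def proj (K : Submodule ℂ E) : E →L[ℂ] E :=
  K.subtypeL.comp K.orthogonalProjection

/-- The Möbius (non-additivity) operator `𝔇(H₁,H₂)`. -/
noncomputable def MobD (H₁ H₂ : Submodule ℂ E) : E →L[ℂ] E :=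
  proj (H₁ ⊔ H₂) + proj (H₁ ⊓ H₂) - proj H₁ - proj H₂

/-! Once one knows that nested projections absorb each other (`Π(K) Π(L) = Π(L) Π(K) = Π(K)` for
`K ≤ L`), the identity is ring algebra: `Π(H₁ ⊔ H₂)` fixes `Π(Hᵢ)` from the left, `Π(H₁ ⊓ H₂)` is
fixed by `Π(Hᵢ)` from the right, and expanding `𝔇(H₁,H₂)(Π(H₁) - Π(H₂))` leaves only the commutator. -/

theorem IsIdempotentElem.mul_sub_mul_comm_eq_mul_sub {R : Type*} [Ring R] {p q j m : R}
    (hp : IsIdempotentElem p) (hq : IsIdempotentElem q)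
    (hjp : j * p = p) (hjq : j * q = q) (hmp : m * p = m) (hmq : m * q = m) :
    p * q - q * p = (j + m - p - q) * (p - q) := by
  simp only [add_mul, sub_mul, mul_sub, hjp, hjq, hmp, hmq, hp.eq, hq.eq]
  abel

theorem isIdempotentElem_proj (K : Submodule ℂ E) : IsIdempotentElem (proj K) :=
  K.isIdempotentElem_starProjection

theorem proj_mul_proj_eq_left_of_le {K L : Submodule ℂ E} (h : K ≤ L) :
    proj K * proj L = proj K :=
  Submodule.starProjection_comp_starProjection_of_le h

theorem proj_mul_proj_eq_right_of_le {K L : Submodule ℂ E} (h : K ≤ L) :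
    proj L * proj K = proj K :=
  ContinuousLinearMap.ext fun v ↦
    Submodule.starProjection_eq_self_iff.mpr (h (K.starProjection_apply_mem v))

theorem commutator_eq_mobD_mul (H₁ H₂ : Submodule ℂ E) :
    proj H₁ * proj H₂ - proj H₂ * proj H₁ = MobD H₁ H₂ * (proj H₁ - proj H₂) :=
  (isIdempotentElem_proj H₁).mul_sub_mul_comm_eq_mul_sub (isIdempotentElem_proj H₂)
    (proj_mul_proj_eq_right_of_le le_sup_left) (proj_mul_proj_eq_right_of_le le_sup_right)
    (proj_mul_proj_eq_left_of_le inf_le_left) (proj_mul_proj_eq_left_of_le inf_le_right)
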